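/- arXiv:2106.09350 — 3 statements merged into one kernel-verified Lean document; each statement's English description precedes it below -/
import Mathlib

section
/- If A and B are n×n positive semidefinite real matrices, then det(A+B)^(1/n) ≥ det(A)^(1/n) + det(B)^(1/n) (Minkowski's determinant inequality). -/
/-!
Write the positive definite `A` as `Sᴴ S`. Then `B = Sᴴ M S` and `A + B = Sᴴ (1 + M) S` with
`M = S⁻ᴴ B S⁻¹ ⪰ 0`, so after factoring out `det A` the inequality becomes
`1 + (∏ λᵢ)^(1/n) ≤ (∏ (1 + λᵢ))^(1/n)` for the eigenvalues `λᵢ ≥ 0` of `M`. This is the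
superadditivity of the geometric mean, which follows by applying AM-GM to the ratios
`xᵢ / (xᵢ + yᵢ)` and `yᵢ / (xᵢ + yᵢ)` and adding, since these sum to `1` for each `i`.
If neither `A` nor `B` is positive definite, both determinants vanish and the claim is trivial.
-/

open Finset

namespace Real

theorem geom_mean_add_geom_mean_le_geom_mean_add {ι : Type*} [Fintype ι] [Nonempty ι]
    {x y : ι → ℝ} (hx : ∀ i, 0 ≤ x i) (hy : ∀ i, 0 ≤ y i) :
    (∏ i, x i) ^ ((1 : ℝ) / Fintype.card ι) + (∏ i, y i) ^ ((1 : ℝ) / Fintype.card ι) ≤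
      (∏ i, (x i + y i)) ^ ((1 : ℝ) / Fintype.card ι) := by
  set e : ℝ := 1 / Fintype.card ι
  have he : 0 < e := by positivity
  by_cases! hxy : ∃ i, x i + y i = 0
  · obtain ⟨i, hi⟩ := hxy
    have hprod : ∀ z : ι → ℝ, z i = 0 → (∏ j, z j) ^ e = 0 := fun z hz => by
      rw [prod_eq_zero (mem_univ i) hz, zero_rpow he.ne']
    rw [hprod x (by linarith [hx i, hy i]), hprod y (by linarith [hx i, hy i]), add_zero]
    exact rpow_nonneg (prod_nonneg fun j _ => add_nonneg (hx j) (hy j)) e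
  have hpos : ∀ i, 0 < x i + y i := fun i => (add_nonneg (hx i) (hy i)).lt_of_ne' (hxy i)
  have amgm : ∀ z : ι → ℝ, (∀ i, 0 ≤ z i) →
      (∏ i, z i) ^ e / (∏ i, (x i + y i)) ^ e ≤ e * ∑ i, z i / (x i + y i) := fun z hz => by
    have hratio : ∀ i ∈ univ, 0 ≤ z i / (x i + y i) := fun i _ => div_nonneg (hz i) (hpos i).le
    rw [← div_rpow (prod_nonneg fun i _ => hz i) (prod_nonneg fun i _ => (hpos i).le),
      ← prod_div_distrib, ← finsetProd_rpow _ _ hratio, mul_sum]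
    refine geom_mean_le_arith_mean_weighted _ _ _ (fun _ _ => he.le) ?_ hratio
    simp [e]
  have hsum : e * ∑ i, x i / (x i + y i) + e * ∑ i, y i / (x i + y i) = 1 := by
    rw [← mul_add, ← sum_add_distrib]
    simp [← add_div, div_self (hpos _).ne', e]
  have hQ : 0 < (∏ i, (x i + y i)) ^ e := rpow_pos_of_pos (prod_pos fun i _ => hpos i) e
  rw [← div_le_one hQ, add_div]
  linarith [amgm x hx, amgm y hy]

end Real

namespace Matrix

variable {n : Type*} [Fintype n] [DecidableEq n]

theorem IsHermitian.det_one_add {𝕜 : Type*} [RCLike 𝕜] {M : Matrix n n 𝕜} (hM : M.IsHermitian) :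
    (1 + M).det = ∏ i, (1 + (hM.eigenvalues i : 𝕜)) := by
  conv_lhs => rw [hM.spectral_theorem,
    ← map_one (Unitary.conjStarAlgAut 𝕜 _ hM.eigenvectorUnitary), ← map_add,
    Unitary.conjStarAlgAut_apply, det_mul_right_comm,
    Unitary.mul_star_self_of_mem hM.eigenvectorUnitary.2, one_mul,
    ← diagonal_one, diagonal_add, det_diagonal]
  rfl

section
variable [Nonempty n]

theorem PosSemidef.one_add_det_rpow_le {M : Matrix n n ℝ} (hM : M.PosSemidef) :
    1 + M.det ^ ((1 : ℝ) / Fintype.card n) ≤ (1 + M).det ^ ((1 : ℝ) / Fintype.card n) := by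
  have h := Real.geom_mean_add_geom_mean_le_geom_mean_add (fun _ => zero_le_one)
    hM.eigenvalues_nonneg
  simpa [hM.isHermitian.det_eq_prod_eigenvalues, hM.isHermitian.det_one_add] using h

open scoped MatrixOrder in
theorem PosDef.det_rpow_add_det_rpow_le {A B : Matrix n n ℝ} (hA : A.PosDef) (hB : B.PosSemidef) :
    A.det ^ ((1 : ℝ) / Fintype.card n) + B.det ^ ((1 : ℝ) / Fintype.card n) ≤
      (A + B).det ^ ((1 : ℝ) / Fintype.card n) := by
  obtain ⟨S, hAS⟩ := CStarAlgebra.nonneg_iff_eq_star_mul_self.mp hA.posSemidef.nonneg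
  rw [star_eq_conjTranspose] at hAS
  have hS : IsUnit S.det := by
    have h := hA.det_pos
    rw [hAS, det_mul] at h
    exact (right_ne_zero_of_mul h.ne').isUnit
  set M := (S⁻¹)ᴴ * B * S⁻¹
  have hM : M.PosSemidef := hB.conjTranspose_mul_mul_same S⁻¹
  have hB_eq : B = Sᴴ * M * S := by
    simp only [M, Matrix.mul_assoc]
    rw [nonsing_inv_mul _ hS, Matrix.mul_one, ← Matrix.mul_assoc, ← conjTranspose_mul,
      nonsing_inv_mul _ hS, conjTranspose_one, Matrix.one_mul]
  have hAB_eq : A + B = Sᴴ * (1 + M) * S := by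
    rw [hAS, hB_eq, Matrix.mul_add, Matrix.add_mul, Matrix.mul_one]
  have hdet (X : Matrix n n ℝ) : (Sᴴ * X * S).det = A.det * X.det := by
    rw [hAS]
    simp only [det_mul]
    ring
  rw [hAB_eq, hB_eq, hdet, hdet, Real.mul_rpow hA.det_pos.le hM.det_nonneg,
    Real.mul_rpow hA.det_pos.le (PosSemidef.one.add hM).det_nonneg]
  calc _ = A.det ^ ((1 : ℝ) / Fintype.card n) * (1 + M.det ^ ((1 : ℝ) / Fintype.card n)) := by
        ring
    _ ≤ _ := mul_le_mul_of_nonneg_left hM.one_add_det_rpow_le (Real.rpow_nonneg hA.det_pos.le _)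

end

end Matrix

theorem minkowski_det_inequality (n : ℕ) (hn : 0 < n)
    (A B : Matrix (Fin n) (Fin n) ℝ)
    (hA : A.PosSemidef) (hB : B.PosSemidef) :
    A.det ^ ((1 : ℝ) / n) + B.det ^ ((1 : ℝ) / n) ≤ (A + B).det ^ ((1 : ℝ) / n) := by
  have : Nonempty (Fin n) := Fin.pos_iff_nonempty.mp hn
  by_cases hA0 : A.det = 0
  · by_cases hB0 : B.det = 0
    · rw [hA0, hB0, Real.zero_rpow (by positivity), zero_add]
      exact Real.rpow_nonneg (hA.add hB).det_nonneg _
    · simpa only [Fintype.card_fin, add_comm] using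
        (hB.posDef_iff_det_ne_zero.mpr hB0).det_rpow_add_det_rpow_le hA
  · simpa only [Fintype.card_fin] using
      (hA.posDef_iff_det_ne_zero.mpr hA0).det_rpow_add_det_rpow_le hB
end

section
/- For a positive definite n×n matrix M, the set function F(S) = log det(M[S,S]) (with F(∅)=0) is submodular: for all S, T ⊆ {1,…,n}, F(S∪T) + F(S∩T) ≤ F(S) + F(T). -/
/-!
Adjoining `a ∉ S` multiplies `det M[S]` by the Schur complement `M a a - mᵀ M[S]⁻¹ m`, which is
`rᵀ M r` for the residual `r = e_a - x`, where `x` is supported on `S` and chosen so that `M r`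
vanishes on `S`. For `S ⊆ T` the residuals of `S` and `T` differ by a vector supported on `T`,
hence `M`-orthogonal to the residual of `T`, so by Pythagoras the Schur complement can only drop
as the set grows. Thus `log det M[·]` has diminishing returns, which telescopes to submodularity.
-/

open Matrix Finset

namespace Finset

variable {α β : Type*} [DecidableEq α] [AddCommMonoid β] [PartialOrder β]
  [IsOrderedCancelAddMonoid β]

theorem submodular_of_diminishing_returns {F : Finset α → β}
    (h : ∀ ⦃S T : Finset α⦄ ⦃a : α⦄, S ⊆ T → a ∉ T → F (insert a T) + F S ≤ F (insert a S) + F T)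
    (S T : Finset α) : F (S ∪ T) + F (S ∩ T) ≤ F S + F T := by
  have telescope : ∀ D : Finset α, Disjoint D T → ∀ V ⊆ T,
      F (D ∪ T) + F V ≤ F (D ∪ V) + F T := by
    intro D
    induction D using Finset.induction_on with
    | empty => simp [add_comm]
    | @insert a D haD ih =>
      intro hdisj V hV
      rw [disjoint_insert_left] at hdisj
      have step := h (union_subset_union_right (s := D) hV) (a := a) (by simp [haD, hdisj.1])
      have hsum := add_le_add step (ih hdisj.2 V hV)
      rw [insert_union, insert_union]
      refine le_of_add_le_add_right (a := F (D ∪ V) + F (D ∪ T)) ?_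
      convert hsum using 1 <;> abel
  simpa only [sdiff_union_self_eq_union, sdiff_union_inter] using
    telescope (S \ T) sdiff_disjoint (S ∩ T) inter_subset_right

end Finset

namespace Matrix

variable {ι R : Type*}

abbrev principalSubmatrix (M : Matrix ι ι R) (S : Finset ι) : Matrix S S R :=
  M.submatrix (↑) (↑)

section ExtendByZero

variable [Fintype ι] [NonUnitalNonAssocSemiring R] {S : Finset ι}

theorem dotProduct_extend_zero (v : ι → R) (y : S → R) :
    v ⬝ᵥ Function.extend (↑) y 0 = (fun i : S => v i) ⬝ᵥ y := by
  have hzero : ∀ i ∉ S, v i * Function.extend ((↑) : S → ι) y 0 i = 0 := fun i hi => by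
    rw [Function.extend_apply' _ _ _ fun ⟨k, hk⟩ => hi (hk ▸ k.2), Pi.zero_apply, mul_zero]
  rw [dotProduct, ← sum_subset (subset_univ S) fun i _ hi => hzero i hi, ← sum_coe_sort S]
  simp only [Subtype.val_injective.extend_apply, dotProduct]

theorem mulVec_extend_zero_apply (M : Matrix ι ι R) (y : S → R) (j : ι) :
    (M *ᵥ Function.extend (↑) y 0) j = (fun i : S => M j i) ⬝ᵥ y :=
  dotProduct_extend_zero (M j) y

end ExtendByZero

theorem PosSemidef.dotProduct_mulVec_le_add [Fintype ι] {M : Matrix ι ι ℝ} (hM : M.PosSemidef)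
    {r w : ι → ℝ} (h : w ⬝ᵥ M *ᵥ r = 0) : r ⬝ᵥ M *ᵥ r ≤ (r + w) ⬝ᵥ M *ᵥ (r + w) := by
  have hsymm : r ⬝ᵥ M *ᵥ w = w ⬝ᵥ M *ᵥ r := by
    rw [dotProduct_mulVec, ← mulVec_transpose, ← conjTranspose_eq_transpose_of_trivial, hM.1,
      dotProduct_comm]
  have hw : 0 ≤ w ⬝ᵥ M *ᵥ w := by simpa using hM.dotProduct_mulVec_nonneg w
  rw [mulVec_add, dotProduct_add, add_dotProduct, add_dotProduct, hsymm, h]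
  linarith

variable [DecidableEq ι]

theorem PosDef.isUnit_det_principalSubmatrix {M : Matrix ι ι ℝ} (hM : M.PosDef) (S : Finset ι) :
    IsUnit (M.principalSubmatrix S).det :=
  (hM.submatrix Subtype.val_injective).det_pos.ne'.isUnit

section CommRing

variable [CommRing R]

noncomputable def schurCompl (M : Matrix ι ι R) (S : Finset ι) (a : ι) : R :=
  M a a - (fun i : S => M a i) ⬝ᵥ ((M.principalSubmatrix S)⁻¹ *ᵥ fun i : S => M i a)

theorem det_principalSubmatrix_insert {M : Matrix ι ι R} {S : Finset ι} {a : ι}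
    (hS : IsUnit (M.principalSubmatrix S).det) (ha : a ∉ S) :
    (M.principalSubmatrix (insert a S)).det = (M.principalSubmatrix S).det * schurCompl M S a := by
  let e : S ⊕ Unit ≃ ↥(insert a S) :=
    ((subtypeInsertEquivOption ha).trans (Equiv.optionEquivSumPUnit _)).symm
  have hblocks : (M.principalSubmatrix (insert a S)).submatrix e e =
      fromBlocks (M.principalSubmatrix S) (replicateCol Unit fun i : S => M i a)
        (replicateRow Unit fun i : S => M a i) (of fun _ _ => M a a) := by
    ext (i | i) (j | j) <;> rfl
  let := invertibleOfIsUnitDet _ hS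
  rw [← det_submatrix_equiv_self e, hblocks, det_fromBlocks₁₁, invOf_eq_nonsing_inv]
  congr 1
  rw [det_unique, sub_apply, ← replicateRow_vecMul, replicateRow_mul_replicateCol_apply,
    ← dotProduct_mulVec]
  rfl

noncomputable def residual (M : Matrix ι ι R) (S : Finset ι) (a : ι) : ι → R :=
  Pi.single a 1 -
    Function.extend ((↑) : S → ι) ((M.principalSubmatrix S)⁻¹ *ᵥ fun i : S => M i a) 0

theorem residual_apply_of_notMem (M : Matrix ι ι R) {S : Finset ι} (a : ι) {i : ι} (hi : i ∉ S) :
    residual M S a i = (Pi.single a 1 : ι → R) i := by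
  rw [residual, Pi.sub_apply, Function.extend_apply' _ _ _ fun ⟨k, hk⟩ => hi (hk ▸ k.2),
    Pi.zero_apply, sub_zero]

variable [Fintype ι] {M : Matrix ι ι R} {S : Finset ι}

theorem mulVec_residual_apply (hS : IsUnit (M.principalSubmatrix S).det) (a : ι) (i : S) :
    (M *ᵥ residual M S a) i = 0 := by
  rw [residual, mulVec_sub, Pi.sub_apply, mulVec_extend_zero_apply, mulVec_single_one]
  change M i a - (M.principalSubmatrix S *ᵥ (M.principalSubmatrix S)⁻¹ *ᵥ _) i = 0
  rw [mulVec_mulVec, mul_nonsing_inv _ hS, one_mulVec, sub_self]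

theorem residual_dotProduct_mulVec_residual (hS : IsUnit (M.principalSubmatrix S).det) (a : ι) :
    residual M S a ⬝ᵥ M *ᵥ residual M S a = schurCompl M S a := by
  have horth : (fun i : S => (M *ᵥ residual M S a) i) = 0 := funext (mulVec_residual_apply hS a)
  nth_rw 1 [residual]
  rw [sub_dotProduct, single_dotProduct, one_mul, dotProduct_comm, dotProduct_extend_zero, horth,
    zero_dotProduct, sub_zero, residual, mulVec_sub, Pi.sub_apply, mulVec_extend_zero_apply,
    mulVec_single_one]
  rfl

end CommRing

variable [Fintype ι] {M : Matrix ι ι ℝ}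

theorem schurCompl_le_schurCompl_of_subset (hM : M.PosSemidef) {S T : Finset ι}
    (hS : IsUnit (M.principalSubmatrix S).det) (hT : IsUnit (M.principalSubmatrix T).det)
    (hST : S ⊆ T) (a : ι) : schurCompl M T a ≤ schurCompl M S a := by
  rw [← residual_dotProduct_mulVec_residual hT, ← residual_dotProduct_mulVec_residual hS,
    ← add_sub_cancel (residual M T a) (residual M S a)]
  -- `residual M S a - residual M T a` is supported on `T`, where `M *ᵥ residual M T a` vanishes.
  refine hM.dotProduct_mulVec_le_add (sum_eq_zero fun i _ => ?_)
  by_cases hi : i ∈ T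
  · rw [mulVec_residual_apply hT a ⟨i, hi⟩, mul_zero]
  · rw [Pi.sub_apply, residual_apply_of_notMem M a hi,
      residual_apply_of_notMem M a fun h => hi (hST h), sub_self, zero_mul]

theorem PosDef.schurCompl_pos (hM : M.PosDef) {S : Finset ι} {a : ι} (ha : a ∉ S) :
    0 < schurCompl M S a := by
  rw [← residual_dotProduct_mulVec_residual (hM.isUnit_det_principalSubmatrix S)]
  have hr : residual M S a ≠ 0 := fun h => by
    simpa [residual_apply_of_notMem M a ha] using congrFun h a
  simpa using hM.dotProduct_mulVec_pos hr

theorem PosDef.log_det_insert_add_le (hM : M.PosDef) {S T : Finset ι} (hST : S ⊆ T) {a : ι}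
    (ha : a ∉ T) :
    Real.log (M.principalSubmatrix (insert a T)).det + Real.log (M.principalSubmatrix S).det ≤
      Real.log (M.principalSubmatrix (insert a S)).det +
        Real.log (M.principalSubmatrix T).det := by
  have haS : a ∉ S := fun h => ha (hST h)
  have hS := hM.isUnit_det_principalSubmatrix S
  have hT := hM.isUnit_det_principalSubmatrix T
  rw [det_principalSubmatrix_insert hT ha, det_principalSubmatrix_insert hS haS,
    Real.log_mul hT.ne_zero (hM.schurCompl_pos ha).ne',
    Real.log_mul hS.ne_zero (hM.schurCompl_pos haS).ne']
  have hlog := Real.log_le_log (hM.schurCompl_pos ha)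
    (schurCompl_le_schurCompl_of_subset hM.posSemidef hS hT hST a)
  linarith

end Matrix

theorem logdet_submodular (n : ℕ)
    (M : Matrix (Fin n) (Fin n) ℝ) (hM : M.PosDef)
    (F : Finset (Fin n) → ℝ)
    (hF : ∀ S : Finset (Fin n),
      F S = Real.log (M.submatrix (fun i : S => (i : Fin n)) (fun j : S => (j : Fin n))).det)
    (S T : Finset (Fin n)) :
    F (S ∪ T) + F (S ∩ T) ≤ F S + F T := by
  simp only [hF]
  exact submodular_of_diminishing_returns (F := fun S => Real.log (M.principalSubmatrix S).det)
    (fun _ _ _ hST ha => hM.log_det_insert_add_le hST ha) S T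
end

section
/- The permanent of a positive semidefinite matrix is super-additive: for PSD n×n matrices A, B, perm(A+B) ≥ perm(A) + perm(B), and perm(A) > 0 for positive definite A. -/
/-!
For a Gram matrix `W * Wᵀ` one has the sum-of-squares identity
`card (Perm ι) • perm (W * Wᵀ) = ∑_f perm (W.submatrix id f) ^ 2`,
the sum running over all ways `f` of choosing a column of `W` for every row: expand
`perm (W * Wᵀ)` over pairs of permutations and sum the products over `f`. Hence permanents of
positive semidefinite matrices are nonnegative. Writing `A = U * Uᵀ` and `B = V * Vᵀ`, the matrix
`A + B` is the Gram matrix of `fromCols U V`; among its column choices are those using only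
columns of `U` and those using only columns of `V` (disjoint as soon as there is a row), and
these contribute exactly the identities for `A` and `B`. A positive definite `A` dominates some
`r • 1` with `r > 0`, so `perm A ≥ perm (r • 1) = r ^ n`.
-/

open Finset Equiv

namespace Matrix

variable {ι κ κ' R : Type*} [Fintype ι] [DecidableEq ι] [Fintype κ] [Fintype κ']

section CommSemiring

variable [CommSemiring R]

theorem sum_perm_sum_perm_prod_eq_card_perm_smul_permanent (G : Matrix ι ι R) :
    ∑ σ : Perm ι, ∑ τ : Perm ι, ∏ i, G (σ i) (τ i) = Fintype.card (Perm ι) • G.permanent := by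
  have reindex (σ τ : Perm ι) : ∏ i, G (σ i) (τ i) = ∏ i, G ((σ * τ⁻¹) i) i := by
    rw [← Equiv.prod_comp τ⁻¹]
    simp [Perm.mul_apply]
  simp_rw [reindex]
  rw [sum_comm, ← card_univ, ← sum_const]
  refine sum_congr rfl fun τ _ => ?_
  exact Equiv.sum_comp (Equiv.mulRight τ⁻¹) fun σ => ∏ i, G (σ i) i

theorem card_perm_smul_permanent_mul_transpose (W : Matrix ι κ R) :
    Fintype.card (Perm ι) • (W * Wᵀ).permanent =
      ∑ f : ι → κ, (W.submatrix id f).permanent ^ 2 := by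
  calc Fintype.card (Perm ι) • (W * Wᵀ).permanent
      = ∑ σ : Perm ι, ∑ τ : Perm ι, ∏ i, (W * Wᵀ) (σ i) (τ i) :=
        (sum_perm_sum_perm_prod_eq_card_perm_smul_permanent _).symm
    _ = ∑ σ : Perm ι, ∑ τ : Perm ι, ∑ f : ι → κ, ∏ i, W (σ i) (f i) * W (τ i) (f i) := by
        simp only [mul_apply, transpose_apply, Fintype.prod_sum]
    _ = ∑ f : ι → κ, ∑ σ : Perm ι, ∑ τ : Perm ι, ∏ i, W (σ i) (f i) * W (τ i) (f i) :=
        (sum_comm.trans (sum_congr rfl fun _ _ => sum_comm)).symm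
    _ = ∑ f : ι → κ, (W.submatrix id f).permanent ^ 2 := by
        simp only [permanent, sq, sum_mul_sum, prod_mul_distrib, submatrix_apply, id]

end CommSemiring

section Ordered

variable [CommRing R] [LinearOrder R] [IsStrictOrderedRing R]

theorem permanent_mul_transpose_nonneg (W : Matrix ι κ R) : 0 ≤ (W * Wᵀ).permanent := by
  refine (nsmul_nonneg_iff (Fintype.card_ne_zero (α := Perm ι))).mp ?_
  rw [card_perm_smul_permanent_mul_transpose]
  exact sum_nonneg fun f _ => sq_nonneg _

theorem permanent_mul_transpose_add_le [Nonempty ι] (U : Matrix ι κ R) (V : Matrix ι κ' R) :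
    (U * Uᵀ).permanent + (V * Vᵀ).permanent ≤ (U * Uᵀ + V * Vᵀ).permanent := by
  set W := fromCols U V
  have hW : U * Uᵀ + V * Vᵀ = W * Wᵀ := by
    rw [transpose_fromCols, fromCols_mul_fromRows]
  let e : (ι → κ) ⊕ (ι → κ') → ι → κ ⊕ κ' := Sum.elim (Sum.inl ∘ ·) (Sum.inr ∘ ·)
  have he : Function.Injective e := by
    obtain ⟨i⟩ := ‹Nonempty ι›
    rintro (f | f) (g | g) hfg <;> have := congrFun hfg i <;> simp_all [e, funext_iff]
  refine (nsmul_le_nsmul_iff_right (Fintype.card_ne_zero (α := Perm ι))).mp ?_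
  rw [smul_add, hW]
  simp only [card_perm_smul_permanent_mul_transpose]
  calc ∑ f : ι → κ, (U.submatrix id f).permanent ^ 2 +
        ∑ f : ι → κ', (V.submatrix id f).permanent ^ 2
      = ∑ x, (W.submatrix id (e x)).permanent ^ 2 := by
        rw [Fintype.sum_sum_type]; rfl
    _ = ∑ f ∈ univ.map ⟨e, he⟩, (W.submatrix id f).permanent ^ 2 := by
        rw [sum_map]; rfl
    _ ≤ ∑ f, (W.submatrix id f).permanent ^ 2 :=
        sum_le_sum_of_subset_of_nonneg (subset_univ _) fun f _ _ => sq_nonneg _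

end Ordered

theorem PosSemidef.exists_eq_mul_transpose {A : Matrix ι ι ℝ} (hA : A.PosSemidef) :
    ∃ W : Matrix ι ι ℝ, A = W * Wᵀ := by
  open scoped MatrixOrder in
  obtain ⟨U, rfl⟩ := CStarAlgebra.nonneg_iff_eq_star_mul_self.mp hA.nonneg
  refine ⟨Uᵀ, ?_⟩
  rw [transpose_transpose, star_eq_conjTranspose, conjTranspose_eq_transpose_of_trivial]

theorem PosSemidef.permanent_nonneg {A : Matrix ι ι ℝ} (hA : A.PosSemidef) : 0 ≤ A.permanent := by
  obtain ⟨W, rfl⟩ := hA.exists_eq_mul_transpose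
  exact permanent_mul_transpose_nonneg W

theorem PosSemidef.permanent_add_permanent_le [Nonempty ι] {A B : Matrix ι ι ℝ}
    (hA : A.PosSemidef) (hB : B.PosSemidef) : A.permanent + B.permanent ≤ (A + B).permanent := by
  obtain ⟨U, rfl⟩ := hA.exists_eq_mul_transpose
  obtain ⟨V, rfl⟩ := hB.exists_eq_mul_transpose
  exact permanent_mul_transpose_add_le U V

theorem PosDef.exists_pos_posSemidef_sub_smul_one [Nonempty ι] {A : Matrix ι ι ℝ}
    (hA : A.PosDef) : ∃ r > (0 : ℝ), (A - r • 1).PosSemidef := by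
  open scoped MatrixOrder in
  have := (CFC.exists_pos_algebraMap_le_iff hA.isHermitian.isSelfAdjoint).mpr
    ((StarOrderedRing.isStrictlyPositive_iff_spectrum_pos A).mp hA.isStrictlyPositive)
  simpa only [Algebra.algebraMap_eq_smul_one, le_iff] using this

theorem PosDef.permanent_pos {A : Matrix ι ι ℝ} (hA : A.PosDef) : 0 < A.permanent := by
  cases isEmpty_or_nonempty ι
  · simp [permanent_isEmpty]
  obtain ⟨r, hr, hsub⟩ := hA.exists_pos_posSemidef_sub_smul_one
  have hr1 : (r • 1 : Matrix ι ι ℝ).PosSemidef := PosSemidef.one.smul hr.le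
  calc 0 < r ^ Fintype.card ι + (A - r • 1).permanent := by
        have := hsub.permanent_nonneg
        positivity
    _ = (r • 1 : Matrix ι ι ℝ).permanent + (A - r • 1).permanent := by
        rw [permanent_smul, permanent_one, mul_one]
    _ ≤ A.permanent := by
        simpa using hr1.permanent_add_permanent_le hsub

end Matrix

/-- The permanent is super-additive on PSD matrices and positive on positive definite ones. -/
theorem permanent_superadditive (n : ℕ) (hn : 0 < n)
    (A B : Matrix (Fin n) (Fin n) ℝ)
    (hA : A.PosSemidef) (hB : B.PosSemidef) :
    (A.permanent + B.permanent ≤ (A + B).permanent) ∧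
    (A.PosDef → 0 < A.permanent) := by
  have : Nonempty (Fin n) := Fin.pos_iff_nonempty.mp hn
  exact ⟨hA.permanent_add_permanent_le hB, fun hA' => hA'.permanent_pos⟩
end
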